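/- For all non-negative integers p and q, in the shuffle algebra Sh_ℚ[{a,b}] one has (ab)^p ⧢ (ab)^q = Σ_{n=0}^{min(p,q)} 4^n · binom(p+q-2n, p-n) · T_{p+q,n}. -/

import Mathlib

/-- The two-letter alphabet `{a, b}`. -/
inductive AB : Type
  | a : AB
  | b : AB
  deriving DecidableEq

/-- The shuffle product of two words, as a rational linear combination of
words, defined by the recursion `1 ⧢ w = w ⧢ 1 = w` and
`xu ⧢ yv = x(u ⧢ yv) + y(xu ⧢ v)`. -/
noncomputable def shuffleWord {A : Type*} : List A → List A → (List A →₀ ℚ)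
  | [], w => Finsupp.single w 1
  | u, [] => Finsupp.single u 1
  | x :: u, y :: v =>
      Finsupp.mapDomain (List.cons x) (shuffleWord u (y :: v)) +
      Finsupp.mapDomain (List.cons y) (shuffleWord (x :: u) v)
  termination_by u v => u.length + v.length
  decreasing_by all_goals simp_wf

/-- The word `(ab)^p`. -/
def abpow (p : ℕ) : List AB := (List.replicate p [AB.a, AB.b]).flatten

/-- The number of occurrences of the subword `a²` in a word. -/
def countAA : List AB → ℕ
  | AB.a :: AB.a :: t => countAA (AB.a :: t) + 1
  | _ :: t => countAA t
  | [] => 0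

/-- The number of occurrences of the subword `b²` in a word. -/
def countBB : List AB → ℕ
  | AB.b :: AB.b :: t => countBB (AB.b :: t) + 1
  | _ :: t => countBB t
  | [] => 0

/-- `T_{m,n}`: for `m ≥ n ≥ 0`, the sum of the distinct words occurring in the
shuffle product `(ab)^n ⧢ (ab)^{m-n}` in which the subword `a²` appears
exactly `n` times; `0` for all other pairs. -/
noncomputable def T (m n : ℕ) : List AB →₀ ℚ :=
  if n ≤ m then
    ∑ w ∈ (shuffleWord (abpow n) (abpow (m - n))).support.filter
        (fun w => countAA w = n), Finsupp.single w 1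
  else 0

/-- `U_{m,n}`: for `m ≥ n + 1 ≥ 2`, the sum of the distinct words arising in
the shuffle product `b(ab)^{n-1} ⧢ b(ab)^{m-n-1}` in which the subword `b²`
occurs exactly `n` times; `0` for all other pairs. -/
noncomputable def U (m n : ℕ) : List AB →₀ ℚ :=
  if 1 ≤ n ∧ n + 1 ≤ m then
    ∑ w ∈ (shuffleWord (AB.b :: abpow (n - 1)) (AB.b :: abpow (m - n - 1))).support.filter
        (fun w => countBB w = n), Finsupp.single w 1
  else 0

section Helpers

open Finsupp

lemma shuffleWord_nil_left {A : Type*} (w : List A) : shuffleWord [] w = Finsupp.single w 1 := by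
  rw [shuffleWord]

lemma shuffleWord_nil_right {A : Type*} (u : List A) : shuffleWord u [] = Finsupp.single u 1 := by
  cases u <;> · rw [shuffleWord] <;> simp

/-- Prepend a letter to every word of a linear combination. -/
noncomputable def pre (x : AB) (f : List AB →₀ ℚ) : List AB →₀ ℚ :=
  Finsupp.mapDomain (List.cons x) f

lemma shuffleWord_cons_cons (x y : AB) (u v : List AB) :
    shuffleWord (x :: u) (y :: v) =
      pre x (shuffleWord u (y :: v)) + pre y (shuffleWord (x :: u) v) := by
  rw [shuffleWord]; rfl

lemma shuffleWord_comm {A : Type*} (u v : List A) : shuffleWord u v = shuffleWord v u := by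
  generalize hn : u.length + v.length = n
  induction n using Nat.strong_induction_on generalizing u v with
  | _ n ih =>
    cases u with
    | nil => rw [shuffleWord_nil_left, shuffleWord_nil_right]
    | cons x u =>
      cases v with
      | nil => rw [shuffleWord_nil_left, shuffleWord_nil_right]
      | cons y v =>
        rw [shuffleWord, shuffleWord,
          ih ((x :: u).length + v.length) (by subst hn; simp) (x :: u) v rfl,
          ih (u.length + (y :: v).length) (by subst hn; simp) u (y :: v) rfl,
          add_comm]

@[simp] lemma pre_zero (x : AB) : pre x 0 = 0 := Finsupp.mapDomain_zero

lemma pre_add (x : AB) (f g : List AB →₀ ℚ) : pre x (f + g) = pre x f + pre x g :=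
  Finsupp.mapDomain_add

lemma pre_smul (x : AB) (r : ℚ) (f : List AB →₀ ℚ) : pre x (r • f) = r • pre x f :=
  Finsupp.mapDomain_smul r f

lemma pre_single (x : AB) (w : List AB) (r : ℚ) :
    pre x (Finsupp.single w r) = Finsupp.single (x :: w) r :=
  Finsupp.mapDomain_single

lemma pre_sum {ι : Type*} (x : AB) (s : Finset ι) (g : ι → (List AB →₀ ℚ)) :
    pre x (∑ i ∈ s, g i) = ∑ i ∈ s, pre x (g i) :=
  Finsupp.mapDomain_finset_sum

lemma pre_apply (x : AB) (f : List AB →₀ ℚ) (t : List AB) : pre x f (x :: t) = f t :=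
  Finsupp.mapDomain_apply List.cons_injective f t

lemma pre_support {x : AB} {f : List AB →₀ ℚ} {w : List AB} (h : w ∈ (pre x f).support) :
    ∃ t, t ∈ f.support ∧ w = x :: t := by
  have h2 := Finsupp.mapDomain_support h
  rcases Finset.mem_image.mp h2 with ⟨t, ht, hw⟩
  exact ⟨t, ht, hw.symm⟩

lemma abpow_zero : abpow 0 = [] := rfl

lemma abpow_succ (n : ℕ) : abpow (n + 1) = AB.a :: AB.b :: abpow n := rfl

lemma countAA_nil : countAA [] = 0 := rfl
lemma countAA_b_cons (t : List AB) : countAA (AB.b :: t) = countAA t := by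
  cases t with
  | nil => rfl
  | cons y s => cases y <;> rfl
lemma countAA_ab (t : List AB) : countAA (AB.a :: AB.b :: t) = countAA t := rfl
lemma countAA_aa (t : List AB) :
    countAA (AB.a :: AB.a :: t) = countAA (AB.a :: t) + 1 := rfl

/-- The pair of families `(A m, D m)`. -/
noncomputable def AD : ℕ → ((ℕ → (List AB →₀ ℚ)) × (ℕ → (List AB →₀ ℚ)))
  | 0 =>
    ⟨fun n => if n = 0 then Finsupp.single [] 1 else 0,
     fun n => pre AB.b (pre AB.b (if n = 0 then Finsupp.single [] 1 else 0))⟩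
  | 1 =>
    ⟨fun n => pre AB.a (pre AB.b ((AD 0).1 n)),
     fun n => pre AB.b (pre AB.b (pre AB.a (pre AB.b ((AD 0).1 n)))) +
       pre AB.b (pre AB.a ((AD 0).2 n))⟩
  | (m + 2) =>
    ⟨fun n => pre AB.a (pre AB.b ((AD (m + 1)).1 n)) +
        (match n with | 0 => 0 | (k + 1) => pre AB.a (pre AB.a ((AD m).2 k))),
     fun n => pre AB.b (pre AB.b (pre AB.a (pre AB.b ((AD (m + 1)).1 n)) +
        (match n with | 0 => 0 | (k + 1) => pre AB.a (pre AB.a ((AD m).2 k))))) +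
       pre AB.b (pre AB.a ((AD (m + 1)).2 n))⟩

noncomputable def Af (m n : ℕ) : List AB →₀ ℚ := (AD m).1 n
noncomputable def Df (m n : ℕ) : List AB →₀ ℚ := (AD m).2 n

/-- `Dp m n = Df (m-1) n`, with `Dp 0 n = 0`. -/
noncomputable def Dp : ℕ → ℕ → (List AB →₀ ℚ)
  | 0, _ => 0
  | (m + 1), n => Df m n

lemma Af_zero (n : ℕ) : Af 0 n = if n = 0 then Finsupp.single [] 1 else 0 := rfl

lemma Af_succ_zero (m : ℕ) : Af (m + 1) 0 = pre AB.a (pre AB.b (Af m 0)) := by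
  cases m with
  | zero => rfl
  | succ m => show Af (m + 2) 0 = _; rw [show Af (m+2) 0 = pre AB.a (pre AB.b (Af (m+1) 0)) + 0 from rfl, add_zero]

lemma Af_succ_succ (m k : ℕ) :
    Af (m + 1) (k + 1) = pre AB.a (pre AB.b (Af m (k + 1))) + pre AB.a (pre AB.a (Dp m k)) := by
  cases m with
  | zero => show Af 1 (k+1) = _; rw [show Dp 0 k = 0 from rfl]; simp; rfl
  | succ m => rfl

lemma Df_eq (m n : ℕ) :
    Df m n = pre AB.b (pre AB.b (Af m n)) + pre AB.b (pre AB.a (Dp m n)) := by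
  cases m with
  | zero => show Df 0 n = _; rw [show Dp 0 n = 0 from rfl]; simp; rfl
  | succ m => cases m <;> rfl

end Helpers
section Invariants
open Finsupp

lemma Af_Df_vanish : ∀ m n : ℕ, m < 2 * n → Af m n = 0 ∧ Df m n = 0 := by
  intro m
  induction m using Nat.strong_induction_on with
  | _ m ih =>
    intro n hn
    cases m with
    | zero =>
      have hn0 : n ≠ 0 := by omega
      have hA : Af 0 n = 0 := by rw [Af_zero, if_neg hn0]
      refine ⟨hA, ?_⟩
      rw [Df_eq, hA, show Dp 0 n = 0 from rfl]; simp
    | succ m =>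
      obtain ⟨k, rfl⟩ : ∃ k, n = k + 1 := ⟨n - 1, by omega⟩
      have hDp : Dp m k = 0 := by
        cases m with
        | zero => rfl
        | succ m' => exact (ih m' (by omega) k (by omega)).2
      have hA : Af (m + 1) (k + 1) = 0 := by
        rw [Af_succ_succ, (ih m (by omega) (k + 1) (by omega)).1, hDp]; simp
      refine ⟨hA, ?_⟩
      have hDp2 : Dp (m + 1) (k + 1) = 0 := (ih m (by omega) (k + 1) (by omega)).2
      rw [Df_eq, hA, hDp2]; simp

lemma Dp_vanish (m n : ℕ) (h : m ≤ 2 * n) : Dp m n = 0 := by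
  cases m with
  | zero => rfl
  | succ m' => exact (Af_Df_vanish m' n (by omega)).2

lemma Af_apbow (m : ℕ) : Af m 0 = Finsupp.single (abpow m) 1 := by
  induction m with
  | zero => rfl
  | succ m ih => rw [Af_succ_zero, ih, pre_single, pre_single, abpow_succ]

lemma nice : ∀ m : ℕ,
    (∀ n w, w ∈ (Af m n).support → countAA w = n ∧ Af m n w = 1) ∧
    (∀ n w, w ∈ (Df m n).support →
      countAA w = n ∧ Df m n w = 1 ∧ ∃ t, w = AB.b :: t) := by
  intro m
  induction m using Nat.strong_induction_on with
  | _ m ih =>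
    have hDp : ∀ m' n w, m' ≤ m → w ∈ (Dp m' n).support →
        countAA w = n ∧ Dp m' n w = 1 ∧ ∃ t, w = AB.b :: t := by
      intro m' n w hm hw
      cases m' with
      | zero => simp [Dp] at hw
      | succ m'' => exact (ih m'' (by omega)).2 n w hw
    have hA : ∀ n w, w ∈ (Af m n).support → countAA w = n ∧ Af m n w = 1 := by
      cases m with
      | zero =>
        intro n w hw
        cases n with
        | zero =>
          rw [Af_zero, if_pos rfl] at hw ⊢
          rcases Finset.mem_singleton.mp (Finset.mem_of_subset Finsupp.support_single_subset hw) with rfl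
          exact ⟨rfl, by simp⟩
        | succ k => rw [Af_zero, if_neg (by omega)] at hw; simp at hw
      | succ m' =>
        intro n w hw
        cases n with
        | zero =>
          rw [Af_succ_zero] at hw ⊢
          obtain ⟨t1, ht1, rfl⟩ := pre_support hw
          obtain ⟨t2, ht2, rfl⟩ := pre_support ht1
          obtain ⟨hc, hv⟩ := (ih m' (by omega)).1 0 t2 ht2
          refine ⟨by rw [countAA_ab, hc], ?_⟩
          rw [pre_apply, pre_apply, hv]
        | succ k =>
          rw [Af_succ_succ] at hw ⊢
          rcases Finset.mem_union.mp (Finset.mem_of_subset Finsupp.support_add hw) with h | h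
          · obtain ⟨t1, ht1, rfl⟩ := pre_support h
            obtain ⟨t2, ht2, rfl⟩ := pre_support ht1
            obtain ⟨hc, hv⟩ := (ih m' (by omega)).1 (k + 1) t2 ht2
            refine ⟨by rw [countAA_ab, hc], ?_⟩
            have h2 : (pre AB.a (pre AB.a (Dp m' k))) (AB.a :: AB.b :: t2) = 0 := by
              rw [← Finsupp.notMem_support_iff]
              intro hmem
              obtain ⟨s1, hs1, he⟩ := pre_support hmem
              obtain ⟨s2, hs2, he2⟩ := pre_support hs1
              rw [he2] at he; simp at he
            rw [Finsupp.add_apply, h2, pre_apply, pre_apply, hv, add_zero]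
          · obtain ⟨s1, hs1, rfl⟩ := pre_support h
            obtain ⟨s2, hs2, rfl⟩ := pre_support hs1
            obtain ⟨hc, hv, t, rfl⟩ := hDp m' k s2 (by omega) hs2
            constructor
            · rw [countAA_aa, countAA_ab]
              rw [countAA_b_cons] at hc
              rw [hc]
            · have h2 : (pre AB.a (pre AB.b (Af m' (k + 1)))) (AB.a :: AB.a :: AB.b :: t) = 0 := by
                rw [← Finsupp.notMem_support_iff]
                intro hmem
                obtain ⟨s1', hs1', he⟩ := pre_support hmem
                obtain ⟨s2', hs2', he2⟩ := pre_support hs1'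
                rw [he2] at he
                simp at he
              rw [Finsupp.add_apply, h2, pre_apply, pre_apply, hv, zero_add]
    refine ⟨hA, ?_⟩
    intro n w hw
    rw [Df_eq] at hw ⊢
    rcases Finset.mem_union.mp (Finset.mem_of_subset Finsupp.support_add hw) with h | h
    · obtain ⟨t1, ht1, rfl⟩ := pre_support h
      obtain ⟨t2, ht2, rfl⟩ := pre_support ht1
      obtain ⟨hc, hv⟩ := hA n t2 ht2
      refine ⟨by rw [countAA_b_cons, countAA_b_cons, hc], ?_, ⟨_, rfl⟩⟩
      have h2 : (pre AB.b (pre AB.a (Dp m n))) (AB.b :: AB.b :: t2) = 0 := by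
        rw [← Finsupp.notMem_support_iff]
        intro hmem
        obtain ⟨s1, hs1, he⟩ := pre_support hmem
        obtain ⟨s2, hs2, he2⟩ := pre_support hs1
        rw [he2] at he
        simp at he
      rw [Finsupp.add_apply, h2, pre_apply, pre_apply, hv, add_zero]
    · obtain ⟨s1, hs1, rfl⟩ := pre_support h
      obtain ⟨s2, hs2, rfl⟩ := pre_support hs1
      obtain ⟨hc, hv, t, rfl⟩ := hDp m n s2 (le_refl m) hs2
      constructor
      · rw [countAA_b_cons, countAA_ab]
        rw [countAA_b_cons] at hc
        rw [hc]
      constructor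
      · have h2 : (pre AB.b (pre AB.b (Af m n))) (AB.b :: AB.a :: AB.b :: t) = 0 := by
          rw [← Finsupp.notMem_support_iff]
          intro hmem
          obtain ⟨s1', hs1', he⟩ := pre_support hmem
          obtain ⟨s2', hs2', he2⟩ := pre_support hs1'
          rw [he2] at he
          simp at he
        rw [Finsupp.add_apply, h2, pre_apply, pre_apply, hv, zero_add]
      · exact ⟨_, rfl⟩

end Invariants
section Coeffs

/-- Coefficient of `T_{p+q,n}` in `(ab)^p ⧢ (ab)^q`. -/
def c1 (p q n : ℕ) : ℚ :=
  if n ≤ p ∧ n ≤ q then (4 : ℚ) ^ n * ((p + q - 2 * n).choose (p - n) : ℚ) else 0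

/-- Coefficient of the second family in `b(ab)^p ⧢ (ab)^q`. -/
def c2 (p q n : ℕ) : ℚ :=
  if 1 ≤ q ∧ n ≤ p ∧ n + 1 ≤ q then
    2 * (4 : ℚ) ^ n * ((p + q - 1 - 2 * n).choose (q - 1 - n) : ℚ) else 0

/-- Coefficient of `U`-type elements in `b(ab)^p ⧢ b(ab)^q`. -/
def c3 (p q n : ℕ) : ℚ :=
  if n ≤ p ∧ n ≤ q then 2 * (4 : ℚ) ^ n * ((p + q - 2 * n).choose (p - n) : ℚ) else 0

lemma L1 (p q n : ℕ) (h : 2 * n ≤ p + q + 1) :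
    c1 (p + 1) (q + 1) n = c1 p (q + 1) n + c1 q (p + 1) n := by
  unfold c1
  by_cases hp : n ≤ p
  · by_cases hq : n ≤ q
    · obtain ⟨s, rfl⟩ : ∃ s, p = n + s := ⟨p - n, by omega⟩
      obtain ⟨t, rfl⟩ : ∃ t, q = n + t := ⟨q - n, by omega⟩
      rw [if_pos (by omega), if_pos (by omega), if_pos (by omega)]
      rw [show n + s + 1 + (n + t + 1) - 2 * n = s + t + 2 from by omega,
        show n + s + (n + t + 1) - 2 * n = s + t + 1 from by omega,
        show n + t + (n + s + 1) - 2 * n = s + t + 1 from by omega,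
        show n + s + 1 - n = s + 1 from by omega,
        show n + s - n = s from by omega,
        show n + t - n = t from by omega]
      have hsymm : (s + t + 1).choose t = (s + t + 1).choose (s + 1) := by
        rw [← Nat.choose_symm (show t ≤ s + t + 1 by omega),
          show s + t + 1 - t = s + 1 from by omega]
      have hpascal : (s + t + 2).choose (s + 1) = (s + t + 1).choose s + (s + t + 1).choose (s + 1) := by
        exact Nat.choose_succ_succ (s + t + 1) s
      rw [hsymm, hpascal]
      push_cast
      ring
    · -- n > q
      by_cases hq1 : n = q + 1
      · subst hq1
        rw [if_pos (by omega), if_pos (by omega), if_neg (by omega)]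
        rw [show p + 1 + (q + 1) - 2 * (q + 1) = p - q from by omega,
          show p + 1 - (q + 1) = p - q from by omega,
          show p + (q + 1) - 2 * (q + 1) = p - q - 1 from by omega,
          show p - (q + 1) = p - q - 1 from by omega,
          Nat.choose_self, Nat.choose_self]
        push_cast
        ring
      · rw [if_neg (by omega), if_neg (by omega), if_neg (by omega)]; ring
  · by_cases hq : n ≤ q
    · by_cases hp1 : n = p + 1
      · subst hp1
        rw [if_pos (by omega), if_neg (by omega), if_pos (by omega)]
        rw [show p + 1 + (q + 1) - 2 * (p + 1) = q - p from by omega,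
          show p + 1 - (p + 1) = 0 from by omega,
          show q + (p + 1) - 2 * (p + 1) = q - p - 1 from by omega,
          show q - (p + 1) = q - p - 1 from by omega,
          Nat.choose_zero_right, Nat.choose_self]
        push_cast
        ring
      · rw [if_neg (by omega), if_neg (by omega), if_neg (by omega)]; ring
    · rw [if_neg (by omega), if_neg (by omega), if_neg (by omega)]; ring

lemma L2 (p q n : ℕ) :
    c1 (p + 1) (q + 1) (n + 1) = c2 p (q + 1) n + c2 q (p + 1) n := by
  unfold c1 c2
  by_cases hpq : n ≤ p ∧ n ≤ q
  · obtain ⟨s, rfl⟩ : ∃ s, p = n + s := ⟨p - n, by omega⟩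
    obtain ⟨t, rfl⟩ : ∃ t, q = n + t := ⟨q - n, by omega⟩
    rw [if_pos (by omega), if_pos (by omega), if_pos (by omega)]
    rw [show n + s + 1 + (n + t + 1) - 2 * (n + 1) = s + t from by omega,
      show n + s + 1 - (n + 1) = s from by omega,
      show n + s + (n + t + 1) - 1 - 2 * n = s + t from by omega,
      show n + t + 1 - 1 - n = t from by omega,
      show n + t + (n + s + 1) - 1 - 2 * n = s + t from by omega,
      show n + s + 1 - 1 - n = s from by omega]
    have hsymm : (s + t).choose t = (s + t).choose s := by
      rw [← Nat.choose_symm (show t ≤ s + t by omega), show s + t - t = s from by omega]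
    rw [hsymm]
    ring
  · rw [if_neg (by omega), if_neg (by omega), if_neg (by omega)]; ring

lemma L3 (p q n : ℕ) : c2 p (q + 1) n = c3 p q n := by
  unfold c2 c3
  by_cases hpq : n ≤ p ∧ n ≤ q
  · obtain ⟨s, rfl⟩ : ∃ s, p = n + s := ⟨p - n, by omega⟩
    obtain ⟨t, rfl⟩ : ∃ t, q = n + t := ⟨q - n, by omega⟩
    rw [if_pos (by omega), if_pos (by omega)]
    rw [show n + s + (n + t + 1) - 1 - 2 * n = s + t from by omega,
      show n + t + 1 - 1 - n = t from by omega,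
      show n + s + (n + t) - 2 * n = s + t from by omega,
      show n + s - n = s from by omega]
    have hsymm : (s + t).choose t = (s + t).choose s := by
      rw [← Nat.choose_symm (show t ≤ s + t by omega), show s + t - t = s from by omega]
    rw [hsymm]
  · rw [if_neg (by omega), if_neg (by omega)]

lemma L4 (p q n : ℕ) : c1 q p n + c1 p q n = c3 p q n := by
  unfold c1 c3
  by_cases hpq : n ≤ p ∧ n ≤ q
  · obtain ⟨s, rfl⟩ : ∃ s, p = n + s := ⟨p - n, by omega⟩
    obtain ⟨t, rfl⟩ : ∃ t, q = n + t := ⟨q - n, by omega⟩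
    rw [if_pos (by omega), if_pos (by omega), if_pos (by omega)]
    rw [show n + t + (n + s) - 2 * n = s + t from by omega,
      show n + s + (n + t) - 2 * n = s + t from by omega,
      show n + t - n = t from by omega,
      show n + s - n = s from by omega]
    have hsymm : (s + t).choose t = (s + t).choose s := by
      rw [← Nat.choose_symm (show t ≤ s + t by omega), show s + t - t = s from by omega]
    rw [hsymm]
    ring
  · rw [if_neg (by omega), if_neg (by omega), if_neg (by omega)]; ring

lemma L5 (p q n : ℕ) (h : 2 * n < p + q) : c2 q p n + c2 p q n = c3 p q n := by
  unfold c2 c3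
  by_cases hp : n + 1 ≤ p
  · by_cases hq : n + 1 ≤ q
    · obtain ⟨s, rfl⟩ : ∃ s, p = n + s + 1 := ⟨p - n - 1, by omega⟩
      obtain ⟨t, rfl⟩ : ∃ t, q = n + t + 1 := ⟨q - n - 1, by omega⟩
      rw [if_pos (by omega), if_pos (by omega), if_pos (by omega)]
      rw [show n + t + 1 + (n + s + 1) - 1 - 2 * n = s + t + 1 from by omega,
        show n + s + 1 - 1 - n = s from by omega,
        show n + s + 1 + (n + t + 1) - 1 - 2 * n = s + t + 1 from by omega,
        show n + t + 1 - 1 - n = t from by omega,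
        show n + s + 1 + (n + t + 1) - 2 * n = s + t + 2 from by omega,
        show n + s + 1 - n = s + 1 from by omega]
      have hsymm : (s + t + 1).choose t = (s + t + 1).choose (s + 1) := by
        rw [← Nat.choose_symm (show t ≤ s + t + 1 by omega),
          show s + t + 1 - t = s + 1 from by omega]
      rw [hsymm, Nat.choose_succ_succ (s + t + 1) s]
      push_cast
      ring
    · -- q ≤ n, so n = q is forced if c3 nonzero; n < p
      by_cases hq2 : n ≤ q
      · have hq3 : n = q := by omega
        subst hq3
        rw [if_pos (by omega), if_neg (by omega), if_pos (by omega)]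
        rw [show n + p - 1 - 2 * n = p - n - 1 from by omega,
          show p - 1 - n = p - n - 1 from by omega,
          show p + n - 2 * n = p - n from by omega,
          Nat.choose_self, Nat.choose_self]
        push_cast
        ring
      · rw [if_neg (by omega), if_neg (by omega), if_neg (by omega)]; ring
  · by_cases hp2 : n ≤ p
    · have hp3 : n = p := by omega
      subst hp3
      have hq : n + 1 ≤ q := by omega
      rw [if_neg (by omega), if_pos (by omega), if_pos (by omega)]
      rw [show n + q - 1 - 2 * n = q - n - 1 from by omega,
        show q - 1 - n = q - n - 1 from by omega,
        show n + q - 2 * n = q - n from by omega,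
        show n - n = 0 from by omega,
        Nat.choose_self, Nat.choose_zero_right]
      push_cast
      ring
    · rw [if_neg (by omega), if_neg (by omega), if_neg (by omega)]; ring

end Coeffs
section MainInduction
open Finsupp

/-- Statement `P m`: expansion of `(ab)^p ⧢ (ab)^q`. -/
def Pst (m : ℕ) : Prop := ∀ p q, p + q = m →
  shuffleWord (abpow p) (abpow q) = ∑ n ∈ Finset.range (m + 1), c1 p q n • Af m n

/-- Statement `Q m`: expansion of `b(ab)^p ⧢ (ab)^q`. -/
def Qst (m : ℕ) : Prop := ∀ p q, p + q = m →
  shuffleWord (AB.b :: abpow p) (abpow q) =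
    ∑ n ∈ Finset.range (m + 1),
      (c1 p q n • pre AB.b (Af m n) + c2 p q n • pre AB.a (Dp m n))

/-- Statement `R m`: expansion of `b(ab)^p ⧢ b(ab)^q`. -/
def Rst (m : ℕ) : Prop := ∀ p q, p + q = m →
  shuffleWord (AB.b :: abpow p) (AB.b :: abpow q) =
    ∑ n ∈ Finset.range (m + 1), c3 p q n • Df m n

lemma Pbase_left (m : ℕ) :
    shuffleWord (abpow 0) (abpow m) = ∑ n ∈ Finset.range (m + 1), c1 0 m n • Af m n := by
  rw [abpow_zero, shuffleWord_nil_left,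
    Finset.sum_eq_single_of_mem 0 (Finset.mem_range.mpr (by omega))
      (fun b _ hb => by
        rw [show c1 0 m b = 0 from by unfold c1; rw [if_neg (by omega)], zero_smul])]
  rw [show c1 0 m 0 = 1 from by simp [c1], one_smul, Af_apbow]

lemma Pbase_right (m : ℕ) :
    shuffleWord (abpow m) (abpow 0) = ∑ n ∈ Finset.range (m + 1), c1 m 0 n • Af m n := by
  rw [abpow_zero, shuffleWord_nil_right,
    Finset.sum_eq_single_of_mem 0 (Finset.mem_range.mpr (by omega))
      (fun b _ hb => by
        rw [show c1 m 0 b = 0 from by unfold c1; rw [if_neg (by omega)], zero_smul])]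
  rw [show c1 m 0 0 = 1 from by simp [c1, Nat.choose_self], one_smul, Af_apbow]

lemma Qbase (m : ℕ) :
    shuffleWord (AB.b :: abpow m) (abpow 0) =
      ∑ n ∈ Finset.range (m + 1),
        (c1 m 0 n • pre AB.b (Af m n) + c2 m 0 n • pre AB.a (Dp m n)) := by
  rw [abpow_zero, shuffleWord_nil_right,
    Finset.sum_eq_single_of_mem 0 (Finset.mem_range.mpr (by omega))
      (fun b _ hb => by
        rw [show c1 m 0 b = 0 from by unfold c1; rw [if_neg (by omega)],
          show c2 m 0 b = 0 from by unfold c2; rw [if_neg (by omega)], zero_smul, zero_smul,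
          add_zero])]
  rw [show c1 m 0 0 = 1 from by simp [c1, Nat.choose_self],
    show c2 m 0 0 = 0 from by unfold c2; rw [if_neg (by omega)], one_smul, zero_smul, add_zero,
    Af_apbow, pre_single]

/-- Splitting the `A`-expansion one level down. -/
lemma split_family_sum (M : ℕ) (c : ℕ → ℚ) :
    ∑ n ∈ Finset.range (M + 2), c n • Af (M + 1) n
      = (∑ n ∈ Finset.range (M + 1), c n • pre AB.a (pre AB.b (Af M n)))
        + ∑ n ∈ Finset.range (M + 1), c (n + 1) • pre AB.a (pre AB.a (Dp M n)) := by
  have h1 : ∀ i : ℕ, c (i + 1) • Af (M + 1) (i + 1)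
      = c (i + 1) • pre AB.a (pre AB.b (Af M (i + 1)))
        + c (i + 1) • pre AB.a (pre AB.a (Dp M i)) := fun i => by
    rw [Af_succ_succ, smul_add]
  calc ∑ n ∈ Finset.range (M + 2), c n • Af (M + 1) n
      = (∑ i ∈ Finset.range (M + 1), c (i + 1) • Af (M + 1) (i + 1)) + c 0 • Af (M + 1) 0 :=
        Finset.sum_range_succ' _ (M + 1)
    _ = (∑ i ∈ Finset.range (M + 1),
          (c (i + 1) • pre AB.a (pre AB.b (Af M (i + 1)))
            + c (i + 1) • pre AB.a (pre AB.a (Dp M i))))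
        + c 0 • pre AB.a (pre AB.b (Af M 0)) := by
        rw [Af_succ_zero, Finset.sum_congr rfl (fun i _ => h1 i)]
    _ = ((∑ i ∈ Finset.range (M + 1), c (i + 1) • pre AB.a (pre AB.b (Af M (i + 1))))
          + c 0 • pre AB.a (pre AB.b (Af M 0)))
        + ∑ i ∈ Finset.range (M + 1), c (i + 1) • pre AB.a (pre AB.a (Dp M i)) := by
        rw [Finset.sum_add_distrib]; abel
    _ = (∑ n ∈ Finset.range (M + 2), c n • pre AB.a (pre AB.b (Af M n)))
        + ∑ i ∈ Finset.range (M + 1), c (i + 1) • pre AB.a (pre AB.a (Dp M i)) := by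
        rw [← Finset.sum_range_succ' (fun n => c n • pre AB.a (pre AB.b (Af M n))) (M + 1)]
    _ = (∑ n ∈ Finset.range (M + 1), c n • pre AB.a (pre AB.b (Af M n)))
        + ∑ i ∈ Finset.range (M + 1), c (i + 1) • pre AB.a (pre AB.a (Dp M i)) := by
        rw [Finset.sum_range_succ (fun n => c n • pre AB.a (pre AB.b (Af M n))) (M + 1),
          (Af_Df_vanish M (M + 1) (by omega)).1]
        simp

lemma Pstep (m : ℕ) (hQ : Qst m) : Pst (m + 1) := by
  intro p q hpq
  rcases p with _ | p
  · obtain rfl : q = m + 1 := by omega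
    exact Pbase_left (m + 1)
  rcases q with _ | q
  · obtain rfl : m = p := by omega
    exact Pbase_right (m + 1)
  obtain rfl : m = p + q + 1 := by omega
  have key1 : shuffleWord (abpow (p + 1)) (abpow (q + 1)) =
      pre AB.a (shuffleWord (AB.b :: abpow p) (abpow (q + 1))) +
      pre AB.a (shuffleWord (AB.b :: abpow q) (abpow (p + 1))) := by
    rw [abpow_succ p, abpow_succ q, shuffleWord_cons_cons,
      shuffleWord_comm (AB.a :: AB.b :: abpow p) (AB.b :: abpow q), ← abpow_succ p,
      ← abpow_succ q]
  rw [key1, hQ p (q + 1) (by omega), hQ q (p + 1) (by omega), pre_sum, pre_sum]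
  simp only [pre_add, pre_smul]
  rw [← Finset.sum_add_distrib]
  rw [show p + q + 1 + 1 + 1 = p + q + 1 + 2 from by omega]
  rw [split_family_sum (p + q + 1) (c1 (p + 1) (q + 1)), ← Finset.sum_add_distrib]
  apply Finset.sum_congr rfl
  intro n hn
  rw [L2 p q n]
  by_cases h2 : 2 * n ≤ p + q + 1
  · rw [L1 p q n h2, add_smul, add_smul]
    abel
  · rw [(Af_Df_vanish (p + q + 1) n (by omega)).1, Dp_vanish (p + q + 1) n (by omega)]
    simp

lemma Qstep (m : ℕ) (hP : Pst (m + 1)) (hR : Rst m) : Qst (m + 1) := by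
  intro p q hpq
  rcases q with _ | q
  · obtain rfl : p = m + 1 := by omega
    exact Qbase (m + 1)
  obtain rfl : m = p + q := by omega
  have key : shuffleWord (AB.b :: abpow p) (abpow (q + 1)) =
      pre AB.b (shuffleWord (abpow p) (abpow (q + 1))) +
      pre AB.a (shuffleWord (AB.b :: abpow p) (AB.b :: abpow q)) := by
    rw [abpow_succ q, shuffleWord_cons_cons, ← abpow_succ q]
  rw [key, hP p (q + 1) (by omega), hR p q rfl, pre_sum, pre_sum]
  simp only [pre_smul]
  rw [Finset.sum_add_distrib]
  congr 1
  calc ∑ n ∈ Finset.range (p + q + 1), c3 p q n • pre AB.a (Df (p + q) n)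
      = ∑ n ∈ Finset.range (p + q + 1), c2 p (q + 1) n • pre AB.a (Dp (p + q + 1) n) :=
        Finset.sum_congr rfl (fun n _ => by
          rw [L3, show Dp (p + q + 1) n = Df (p + q) n from rfl])
    _ = ∑ n ∈ Finset.range (p + q + 1 + 1), c2 p (q + 1) n • pre AB.a (Dp (p + q + 1) n) := by
        rw [Finset.sum_range_succ
          (fun n => c2 p (q + 1) n • pre AB.a (Dp (p + q + 1) n)) (p + q + 1),
          show c2 p (q + 1) (p + q + 1) = 0 from by unfold c2; rw [if_neg (by omega)], zero_smul,
          add_zero]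

lemma Rstep (m : ℕ) (hQ : Qst m) : Rst m := by
  intro p q hpq
  obtain rfl : m = p + q := by omega
  have key : shuffleWord (AB.b :: abpow p) (AB.b :: abpow q)
      = pre AB.b (shuffleWord (AB.b :: abpow q) (abpow p)) +
        pre AB.b (shuffleWord (AB.b :: abpow p) (abpow q)) := by
    rw [shuffleWord_cons_cons, shuffleWord_comm (abpow p) (AB.b :: abpow q)]
  rw [key, hQ q p (by omega), hQ p q rfl, pre_sum, pre_sum, ← Finset.sum_add_distrib]
  apply Finset.sum_congr rfl
  intro n hn
  simp only [pre_add, pre_smul]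
  rw [Df_eq, smul_add]
  by_cases h2 : 2 * n < p + q
  · nth_rewrite 2 [← L5 p q n h2]
    rw [← L4 p q n, add_smul, add_smul]
    abel
  · rw [Dp_vanish (p + q) n (by omega)]
    simp only [pre_zero, smul_zero, add_zero]
    rw [← L4 p q n, add_smul]

lemma master : ∀ m : ℕ, Pst m ∧ Qst m ∧ Rst m := by
  intro m
  induction m with
  | zero =>
    have hP : Pst 0 := by
      intro p q h
      obtain rfl : p = 0 := by omega
      obtain rfl : q = 0 := by omega
      exact Pbase_left 0
    have hQ : Qst 0 := by
      intro p q h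
      obtain rfl : p = 0 := by omega
      obtain rfl : q = 0 := by omega
      exact Qbase 0
    exact ⟨hP, hQ, Rstep 0 hQ⟩
  | succ m ih =>
    have hP := Pstep m ih.2.1
    have hQ := Qstep m hP ih.2.2
    exact ⟨hP, hQ, Rstep (m + 1) hQ⟩

end MainInduction
section Final
open Finsupp

lemma T_eq_Af (m n : ℕ) (h : 2 * n ≤ m) : T m n = Af m n := by
  have hP := (master m).1 n (m - n) (by omega)
  have hval : ∀ w, shuffleWord (abpow n) (abpow (m - n)) w
      = ∑ k ∈ Finset.range (m + 1), c1 n (m - n) k * (Af m k) w := by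
    intro w
    rw [hP, Finsupp.finset_sum_apply]
    exact Finset.sum_congr rfl (fun k _ => by rw [Finsupp.smul_apply, smul_eq_mul])
  have hz : ∀ w, countAA w = n → ∀ k ∈ Finset.range (m + 1), k ≠ n →
      c1 n (m - n) k * (Af m k) w = 0 := by
    intro w hcaa k _ hk
    have hzero : (Af m k) w = 0 := by
      by_contra hww
      have hck := ((nice m).1 k w (Finsupp.mem_support_iff.mpr hww)).1
      omega
    rw [hzero, mul_zero]
  have hsupp : ((shuffleWord (abpow n) (abpow (m - n))).support.filter
      (fun w => countAA w = n)) = (Af m n).support := by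
    ext w
    simp only [Finset.mem_filter, Finsupp.mem_support_iff]
    constructor
    · rintro ⟨hne, hcaa⟩
      rw [hval w, Finset.sum_eq_single_of_mem n (Finset.mem_range.mpr (by omega))
        (hz w hcaa)] at hne
      intro h0
      rw [h0, mul_zero] at hne
      exact hne rfl
    · intro hne
      have hn1 := (nice m).1 n w (Finsupp.mem_support_iff.mpr hne)
      refine ⟨?_, hn1.1⟩
      rw [hval w, Finset.sum_eq_single_of_mem n (Finset.mem_range.mpr (by omega))
        (hz w hn1.1), hn1.2, mul_one]
      unfold c1
      rw [if_pos (show n ≤ n ∧ n ≤ m - n from by omega),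
        show n - n = 0 from by omega, Nat.choose_zero_right]
      simp
  rw [T, if_pos (show n ≤ m from by omega), hsupp]
  conv_rhs => rw [← Finsupp.sum_single (Af m n)]
  rw [Finsupp.sum]
  exact Finset.sum_congr rfl (fun w hw => by rw [((nice m).1 n w hw).2])

end Final
/-- **Proposition (expansion of `(ab)^p ⧢ (ab)^q` in the basis `T`).**  For all
non-negative integers `p` and `q`,
`(ab)^p ⧢ (ab)^q = Σ_{n=0}^{min(p,q)} 4^n binom(p+q-2n, p-n) T_{p+q,n}`. -/
theorem abpow_shuffle_abpow (p q : ℕ) :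
    shuffleWord (abpow p) (abpow q) =
      ∑ n ∈ Finset.range (min p q + 1),
        ((4 : ℚ) ^ n * (p + q - 2 * n).choose (p - n)) • T (p + q) n := by
  rw [(master (p + q)).1 p q rfl,
    ← Finset.sum_subset (Finset.range_subset_range.mpr (show min p q + 1 ≤ p + q + 1 from by omega))
      (fun x hx hnx => by
        rw [show c1 p q x = 0 from by
          unfold c1
          rw [if_neg (by simp only [Finset.mem_range] at hx hnx; omega)], zero_smul])]
  apply Finset.sum_congr rfl
  intro n hn
  have hn' : n ≤ min p q := by simpa [Nat.lt_succ_iff] using hn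
  rw [T_eq_Af (p + q) n (by omega)]
  unfold c1
  rw [if_pos (by omega)]
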